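/- Let A_1, A_2 ∈ C_b^∞(ℝ^d × ℝ^d, ℂ^{n×n}) be Hermitian matrix-valued symbols and let g ∈ C¹(ℝ) with g(0) = 0. Assume ∂Λ and ∂Γ have finite (d−1)-dimensional surface measure. Then there exists a constant C > 0, independent of g, such that |W_1(U(g;A_1,A_2); ∂Λ, ∂Γ)| ≤ C ‖g'‖_∞. -/

import Mathlib

open MeasureTheory Filter Matrix Set Asymptotics Bornology
open scoped ENNReal RealInnerProductSpace ComplexOrder MeasureTheory Topology NNReal

noncomputable section

namespace Widom

/-- Euclidean configuration/momentum space `ℝ^d`. -/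
abbrev E (d : ℕ) : Type := EuclideanSpace ℝ (Fin d)

/-- Complex `n × n` matrices. -/
abbrev Mat (n : ℕ) : Type := Matrix (Fin n) (Fin n) ℂ

/-- The Hilbert space `L²(ℝ^d) ⊗ ℂ^n ≅ L²(ℝ^d, ℂ^n)`. -/
abbrev Hs (d n : ℕ) : Type :=
  MeasureTheory.Lp (E := EuclideanSpace ℂ (Fin n)) 2 (volume : Measure (E d))

/-- Bounded operators on `L²(ℝ^d) ⊗ ℂ^n`. -/
abbrev CLM (d n : ℕ) : Type := Hs d n →L[ℂ] Hs d n

/-- Action of a matrix on a vector of `ℂ^n` (with its Euclidean structure). -/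
def mulVecE {n : ℕ} (M : Mat n) (v : EuclideanSpace ℂ (Fin n)) : EuclideanSpace ℂ (Fin n) :=
  (WithLp.equiv 2 (Fin n → ℂ)).symm (M.mulVec ((WithLp.equiv 2 (Fin n → ℂ)) v))

/-! ### Iterated partial derivatives and symbol norms -/

/-- Iterated directional derivatives of a scalar function along a list of directions. -/
def listDeriv {V : Type*} [NormedAddCommGroup V] [NormedSpace ℝ V]
    (vs : List V) (f : V → ℂ) : V → ℂ :=
  vs.foldr (fun v g x => fderiv ℝ g x v) f

/-- The list of directions encoded by a multi-index `α`. -/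
def multiList {V : Type*} {d : ℕ} (dir : Fin d → V) (α : Fin d → ℕ) : List V :=
  (List.finRange d).flatMap fun i => List.replicate (α i) (dir i)

/-- The degree `|α|` of a multi-index. -/
def deg {d : ℕ} (α : Fin d → ℕ) : ℕ := ∑ i, α i

/-- The partial derivative `∂_x^α ∂_ξ^β A(x,ξ)` of a matrix-valued symbol, taken entrywise. -/
def symDeriv {d n : ℕ} (A : E d → E d → Mat n) (α β : Fin d → ℕ) (z : E d × E d) : Mat n :=
  Matrix.of fun i j =>
    listDeriv
      (multiList (fun i => ((EuclideanSpace.single i (1:ℝ) : E d), (0 : E d))) α ++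
        multiList (fun i => ((0 : E d), (EuclideanSpace.single i (1:ℝ) : E d))) β)
      (fun p : E d × E d => A p.1 p.2 i j) z

/-- The partial derivative `∂_x^α ∂_y^β ∂_ξ^γ F(x,y,ξ)` of a matrix-valued amplitude. -/
def ampDeriv {d n : ℕ} (F : E d → E d → E d → Mat n) (α β γ : Fin d → ℕ)
    (z : E d × E d × E d) : Mat n :=
  Matrix.of fun i j =>
    listDeriv
      (multiList (fun i => ((EuclideanSpace.single i (1:ℝ) : E d), (0 : E d), (0 : E d))) α ++
        multiList (fun i => ((0 : E d), (EuclideanSpace.single i (1:ℝ) : E d), (0 : E d))) β ++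
        multiList (fun i => ((0 : E d), (0 : E d), (EuclideanSpace.single i (1:ℝ) : E d))) γ)
      (fun p : E d × E d × E d => F p.1 p.2.1 p.2.2 i j) z

/-- `tr_{ℂ^n} |M|`, the trace of the absolute value `|M| = (M^*M)^{1/2}` of a matrix. -/
def traceAbs {n : ℕ} (M : Mat n) : ℝ :=
  (((Matrix.posSemidef_conjTranspose_mul_self M).1.eigenvectorUnitary.1 *
      Matrix.diagonal ((fun r : ℝ => (r : ℂ)) ∘ (Real.sqrt ·) ∘ (Matrix.posSemidef_conjTranspose_mul_self M).1.eigenvalues) *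
      (star (Matrix.posSemidef_conjTranspose_mul_self M).1.eigenvectorUnitary : Mat n)).trace).re

/-- The symbol norm `N^{(m_x, m_ξ)}(A)` of a matrix-valued symbol. -/
def normSym {d n : ℕ} (A : E d → E d → Mat n) (mx mξ : ℕ) : ℝ :=
  ⨆ (α : Fin d → ℕ) (β : Fin d → ℕ) (_ : deg α ≤ mx) (_ : deg β ≤ mξ) (z : E d × E d),
    traceAbs (symDeriv A α β z)

/-- The symbol norm `N^{(m_x, m_y, m_ξ)}(F)` of a matrix-valued amplitude. -/
def normAmp {d n : ℕ} (F : E d → E d → E d → Mat n) (mx my mξ : ℕ) : ℝ :=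
  ⨆ (α : Fin d → ℕ) (β : Fin d → ℕ) (γ : Fin d → ℕ)
    (_ : deg α ≤ mx) (_ : deg β ≤ my) (_ : deg γ ≤ mξ) (z : E d × E d × E d),
    traceAbs (ampDeriv F α β γ z)

/-! ### Smoothness classes of symbols -/

/-- `A ∈ C_b^∞(ℝ^d × ℝ^d, ℂ^{n×n})`: a matrix-valued symbol, i.e. smooth with all
partial derivatives bounded (expressed entrywise). -/
structure IsSymbol {d n : ℕ} (A : E d → E d → Mat n) : Prop where
  smooth : ∀ i j, ContDiff ℝ (⊤ : ℕ∞) (fun p : E d × E d => A p.1 p.2 i j)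
  bounded : ∀ i j (k : ℕ), ∃ C : ℝ,
    ∀ p : E d × E d, ‖iteratedFDeriv ℝ k (fun q : E d × E d => A q.1 q.2 i j) p‖ ≤ C

/-- `F ∈ C_b^∞(ℝ^d × ℝ^d × ℝ^d, ℂ^{n×n})`: a matrix-valued amplitude. -/
structure IsAmplitude {d n : ℕ} (F : E d → E d → E d → Mat n) : Prop where
  smooth : ∀ i j, ContDiff ℝ (⊤ : ℕ∞) (fun p : E d × E d × E d => F p.1 p.2.1 p.2.2 i j)
  bounded : ∀ i j (k : ℕ), ∃ C : ℝ,
    ∀ p : E d × E d × E d,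
      ‖iteratedFDeriv ℝ k (fun q : E d × E d × E d => F q.1 q.2.1 q.2.2 i j) p‖ ≤ C

/-- `A ∈ C_b^∞(ℝ^d, ℂ^{n×n})`: a matrix-valued symbol depending only on momentum. -/
structure IsSymbolMom {d n : ℕ} (A : E d → Mat n) : Prop where
  smooth : ∀ i j, ContDiff ℝ (⊤ : ℕ∞) (fun ξ : E d => A ξ i j)
  bounded : ∀ i j (k : ℕ), ∃ C : ℝ, ∀ ξ : E d, ‖iteratedFDeriv ℝ k (fun ζ : E d => A ζ i j) ξ‖ ≤ C

/-- Compact support in both variables. -/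
def CompactSupportBoth {d n : ℕ} (A : E d → E d → Mat n) : Prop :=
  ∃ K₁ K₂ : Set (E d), IsCompact K₁ ∧ IsCompact K₂ ∧ ∀ x ξ, A x ξ ≠ 0 → x ∈ K₁ ∧ ξ ∈ K₂

/-- Compact support in the second (momentum) variable. -/
def CompactSupportSnd {d n : ℕ} (A : E d → E d → Mat n) : Prop :=
  ∃ K : Set (E d), IsCompact K ∧ ∀ x ξ, A x ξ ≠ 0 → ξ ∈ K

/-! ### Quantisation -/

/-- `T = Op_L^{lr}(F)`: the bounded operator whose action on (the `L²`-classes of) Schwartz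
functions is given by the iterated oscillatory integral
`(Op_L^{lr}(F)u)(x) = (L/2π)^d ∫ dξ ∫ dy e^{iLξ·(x−y)} F(x,y,ξ) u(y)`. -/
def IsOpAmp {d n : ℕ} (L : ℝ) (F : E d → E d → E d → Mat n) (T : CLM d n) : Prop :=
  ∀ (u : SchwartzMap (E d) (EuclideanSpace ℂ (Fin n))) (f : Hs d n),
    (⇑f =ᵐ[volume] fun x => u x) →
      (⇑(T f) =ᵐ[volume] fun x =>
        (L / (2 * Real.pi)) ^ d •
          ∫ ξ : E d, ∫ y : E d,
            Complex.exp (Complex.I * (L * ⟪ξ, x - y⟫)) • mulVecE (F x y ξ) (u y))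

/-- `T = Op_L^l(A)` for a symbol `A(x,ξ)`. -/
def IsOpL {d n : ℕ} (L : ℝ) (A : E d → E d → Mat n) (T : CLM d n) : Prop :=
  IsOpAmp L (fun x _ ξ => A x ξ) T

/-- `T = Op_L^r(A)` for a symbol `A(y,ξ)`. -/
def IsOpR {d n : ℕ} (L : ℝ) (A : E d → E d → Mat n) (T : CLM d n) : Prop :=
  IsOpAmp L (fun _ y ξ => A y ξ) T

open Classical in
/-- Choice of an operator with a given property (zero if none exists). -/
def chooseOp {d n : ℕ} (P : CLM d n → Prop) : CLM d n :=
  if h : ∃ T, P T then h.choose else 0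

/-- The operator `Op_L^{lr}(F)` of a matrix-valued amplitude. -/
def opAmp {d n : ℕ} (L : ℝ) (F : E d → E d → E d → Mat n) : CLM d n :=
  chooseOp (IsOpAmp L F)

/-- The left quantisation `Op_L^l(A)` of a matrix-valued symbol. -/
def opL {d n : ℕ} (L : ℝ) (A : E d → E d → Mat n) : CLM d n :=
  opAmp L (fun x _ ξ => A x ξ)

/-- The right quantisation `Op_L^r(A)` of a matrix-valued symbol. -/
def opR {d n : ℕ} (L : ℝ) (A : E d → E d → Mat n) : CLM d n :=
  opAmp L (fun _ y ξ => A y ξ)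

/-- `Op_L(m)`: the Fourier multiplier attached to a symbol depending only on momentum. -/
def opM {d n : ℕ} (L : ℝ) (m : E d → Mat n) : CLM d n :=
  opAmp L (fun _ _ ξ => m ξ)

/-- The momentum-space indicator operator `Op_L(1_Γ)`. -/
def indMom (n : ℕ) {d : ℕ} (L : ℝ) (Γ : Set (E d)) : CLM d n :=
  opM L fun ξ => Γ.indicator (fun _ => (1 : Mat n)) ξ

/-- `T = 1_Λ`: multiplication by the indicator function of `Λ` (tensored with `1_n`). -/
def IsIndicatorMul {d n : ℕ} (Λ : Set (E d)) (T : CLM d n) : Prop :=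
  ∀ f : Hs d n, ⇑(T f) =ᵐ[volume] fun x => Λ.indicator (fun _ => (1:ℂ)) x • f x

/-- The position-space indicator operator `1_Λ`. -/
def indMul (n : ℕ) {d : ℕ} (Λ : Set (E d)) : CLM d n :=
  chooseOp (IsIndicatorMul Λ)

/-- Real part of an operator, `Re T = (T + T^*)/2`. -/
def opRe {d n : ℕ} (T : CLM d n) : CLM d n :=
  (2⁻¹ : ℂ) • (T + ContinuousLinearMap.adjoint T)

/-- Hermitian part of a matrix, `Re M = (M + M^*)/2`. -/
def hermPart {n : ℕ} (M : Mat n) : Mat n := (2⁻¹ : ℂ) • (M + Mᴴ)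

/-- The truncated Wiener–Hopf operator `T_L(A; Λ, Γ)`. -/
def T_L {d n : ℕ} (L : ℝ) (A : E d → E d → Mat n) (Λ Γ : Set (E d)) : CLM d n :=
  indMul n Λ * indMom n L Γ * opL L A * indMom n L Γ * indMul n Λ

/-- The symmetrised truncated Wiener–Hopf operator `S_L(A; Λ, Γ)`. -/
def S_L {d n : ℕ} (L : ℝ) (A : E d → E d → Mat n) (Λ Γ : Set (E d)) : CLM d n :=
  indMul n Λ * indMom n L Γ * opRe (opL L fun x ξ => hermPart (A x ξ)) *
    indMom n L Γ * indMul n Λ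

/-- `D_L(A₁, A₂; Λ, Γ) = T_L(A₁; Λ, Γ) + T_L(A₂; Λ, Γ^c)`. -/
def D_L {d n : ℕ} (L : ℝ) (A₁ A₂ : E d → E d → Mat n) (Λ Γ : Set (E d)) : CLM d n :=
  T_L L A₁ Λ Γ + T_L L A₂ Λ Γᶜ

/-- `G_L(A₁, A₂; Λ, Γ) = S_L(A₁; Λ, Γ) + S_L(A₂; Λ, Γ^c)`. -/
def G_L {d n : ℕ} (L : ℝ) (A₁ A₂ : E d → E d → Mat n) (Λ Γ : Set (E d)) : CLM d n :=
  S_L L A₁ Λ Γ + S_L L A₂ Λ Γᶜ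

/-- `S_L` for symbols depending only on momentum. -/
def S_Lmom {d n : ℕ} (L : ℝ) (A : E d → Mat n) (Λ Γ : Set (E d)) : CLM d n :=
  indMul n Λ * indMom n L Γ * opM L (fun ξ => hermPart (A ξ)) * indMom n L Γ * indMul n Λ

/-- `G_L` for symbols depending only on momentum. -/
def G_Lmom {d n : ℕ} (L : ℝ) (A₁ A₂ : E d → Mat n) (Λ Γ : Set (E d)) : CLM d n :=
  S_Lmom L A₁ Λ Γ + S_Lmom L A₂ Λ Γᶜ

/-! ### Trace and Schatten–von Neumann quasi-norms -/

/-- A fixed Hilbert basis of `L²(ℝ^d) ⊗ ℂ^n`. -/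
def hBasisSet (d n : ℕ) : Set (Hs d n) := (exists_hilbertBasis ℂ (Hs d n)).choose

/-- A fixed Hilbert basis of `L²(ℝ^d) ⊗ ℂ^n`. -/
def hBasis (d n : ℕ) : HilbertBasis (hBasisSet d n) ℂ (Hs d n) :=
  (exists_hilbertBasis ℂ (Hs d n)).choose_spec.choose

/-- The trace of a (trace-class) operator on `L²(ℝ^d) ⊗ ℂ^n`. -/
def opTrace {d n : ℕ} (T : CLM d n) : ℂ :=
  ∑' i : hBasisSet d n, @inner ℂ _ _ (hBasis d n i) (T (hBasis d n i))

/-- The `k`-th approximation number (= singular value `s_{k+1}`) of an operator. -/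
def approxNum {d n : ℕ} (T : CLM d n) (k : ℕ) : ℝ :=
  sInf { r : ℝ | ∃ F : CLM d n,
    Module.rank ℂ (LinearMap.range (F : Hs d n →ₗ[ℂ] Hs d n)) ≤ k ∧ r = ‖T - F‖ }

/-- `‖T‖_q^q = ∑_k s_k(T)^q`, the `q`-th power of the Schatten–von Neumann quasi-norm,
as an extended real (so that finiteness is part of any bound). -/
def schattenQ {d n : ℕ} (q : ℝ) (T : CLM d n) : ℝ≥0∞ :=
  ∑' k : ℕ, (ENNReal.ofReal (approxNum T k)) ^ q

/-! ### Basic and admissible domains -/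

/-- A basic domain: the region above the graph of a Lipschitz function in suitable
(rotated/relabelled) Cartesian coordinates. For `d = 1` this yields open half-lines. -/
def IsBasicDomain {d : ℕ} (Ω : Set (E d)) : Prop :=
  ∃ (e : E d ≃ₗᵢ[ℝ] WithLp 2 (EuclideanSpace ℝ (Fin (d - 1)) × ℝ))
    (Φ : EuclideanSpace ℝ (Fin (d - 1)) → ℝ) (K : ℝ≥0),
      LipschitzWith K Φ ∧
      Ω = { x : E d |
        Φ ((WithLp.equiv 2 (EuclideanSpace ℝ (Fin (d - 1)) × ℝ) (e x)).1) <
          (WithLp.equiv 2 (EuclideanSpace ℝ (Fin (d - 1)) × ℝ) (e x)).2 }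

/-- A piecewise `C^m` function: it agrees with globally `C^m` functions on each member of a
finite family of pairwise disjoint open sets whose union is dense. -/
def IsPiecewiseCm {k : ℕ} (m : ℕ) (Φ : EuclideanSpace ℝ (Fin k) → ℝ) : Prop :=
  ∃ (N : ℕ) (P : Fin N → Set (EuclideanSpace ℝ (Fin k)))
    (Ψ : Fin N → EuclideanSpace ℝ (Fin k) → ℝ),
      (∀ j, IsOpen (P j)) ∧ (Pairwise fun i j => Disjoint (P i) (P j)) ∧
      Dense (⋃ j, P j) ∧ (∀ j, ContDiff ℝ (m : ℕ∞) (Ψ j)) ∧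
      ∀ j, ∀ x ∈ P j, Φ x = Ψ j x

/-- A piecewise `C^m`-basic domain. -/
def IsBasicDomainPW {d : ℕ} (m : ℕ) (Ω : Set (E d)) : Prop :=
  ∃ (e : E d ≃ₗᵢ[ℝ] WithLp 2 (EuclideanSpace ℝ (Fin (d - 1)) × ℝ))
    (Φ : EuclideanSpace ℝ (Fin (d - 1)) → ℝ) (K : ℝ≥0),
      LipschitzWith K Φ ∧ IsPiecewiseCm m Φ ∧
      Ω = { x : E d |
        Φ ((WithLp.equiv 2 (EuclideanSpace ℝ (Fin (d - 1)) × ℝ) (e x)).1) <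
          (WithLp.equiv 2 (EuclideanSpace ℝ (Fin (d - 1)) × ℝ) (e x)).2 }

/-- An admissible domain: locally representable by basic domains. -/
def IsAdmissible {d : ℕ} (Ω : Set (E d)) : Prop :=
  ∀ x : E d, ∃ r > (0:ℝ), ∃ Ω₀ : Set (E d),
    IsBasicDomain Ω₀ ∧ Metric.ball x r ∩ Ω = Metric.ball x r ∩ Ω₀

/-- A piecewise `C^m`-admissible domain. -/
def IsAdmissiblePW {d : ℕ} (m : ℕ) (Ω : Set (E d)) : Prop :=
  ∀ x : E d, ∃ r > (0:ℝ), ∃ Ω₀ : Set (E d),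
    IsBasicDomainPW m Ω₀ ∧ Metric.ball x r ∩ Ω = Metric.ball x r ∩ Ω₀

/-! ### Surface measure, normals and the asymptotic coefficients -/

/-- The surface measure: the `(d-1)`-dimensional Hausdorff measure on `ℝ^d`. -/
def surfMeasure (d : ℕ) : Measure (E d) := MeasureTheory.Measure.hausdorffMeasure ((d : ℝ) - 1)

/-- `v` is the (measure-theoretic) exterior unit normal of `Ω` at `x`. -/
def IsExteriorNormalAt {d : ℕ} (Ω : Set (E d)) (x v : E d) : Prop :=
  ‖v‖ = 1 ∧
  (∀ ε > (0:ℝ), Tendsto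
    (fun r : ℝ => (volume (Ω ∩ Metric.ball x r ∩ { y | ε * r < ⟪y - x, v⟫ })).toReal / r ^ d)
    (𝓝[>] 0) (𝓝 0)) ∧
  (∀ ε > (0:ℝ), Tendsto
    (fun r : ℝ => (volume (Ωᶜ ∩ Metric.ball x r ∩ { y | ⟪y - x, v⟫ < -(ε * r) })).toReal / r ^ d)
    (𝓝[>] 0) (𝓝 0))

open Classical in
/-- The exterior unit normal of `Ω` at `x` (zero where it does not exist). -/
def normalAt {d : ℕ} (Ω : Set (E d)) (x : E d) : E d :=
  if h : ∃ v, IsExteriorNormalAt Ω x v then h.choose else 0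

/-- The volume coefficient `𝔚₀(b; Λ, Γ)`. -/
def W0 {d : ℕ} (b : E d → E d → ℂ) (Λ Γ : Set (E d)) : ℂ :=
  ((2 * Real.pi) ^ d)⁻¹ • ∫ x in Λ, ∫ ξ in Γ, b x ξ

/-- The boundary coefficient `𝔚₁(b; ∂Λ, ∂Γ)`. -/
def W1 {d : ℕ} (b : E d → E d → ℂ) (Λ Γ : Set (E d)) : ℂ :=
  if d = 1 then
    ∑' p : ↥(frontier Λ ×ˢ frontier Γ), b (p : E d × E d).1 (p : E d × E d).2
  else
    ((2 * Real.pi) ^ (d - 1))⁻¹ •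
      ∫ x in frontier Λ,
        (∫ ξ in frontier Γ, |⟪normalAt Λ x, normalAt Γ ξ⟫| • b x ξ ∂(surfMeasure d))
        ∂(surfMeasure d)

/-- The symbol `𝔄(g; b)` entering the boundary coefficient. -/
def frakA {d : ℕ} (g : ℝ → ℂ) (b : E d → E d → ℝ) (x ξ : E d) : ℂ :=
  ((2 * Real.pi) ^ 2)⁻¹ •
    ∫ t in (0:ℝ)..1, (g (t * b x ξ) - (t : ℂ) * g (b x ξ)) / ((t * (1 - t) : ℝ) : ℂ)

/-- The scalar symbol `𝔘(g; B₁, B₂)` (pointwise in the matrices), for a given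
application `gM` of the test function to matrices. -/
def frakU {n : ℕ} (gM : Mat n → Mat n) (B₁ B₂ : Mat n) : ℂ :=
  ((2 * Real.pi) ^ 2)⁻¹ •
    ∫ t in (0:ℝ)..1,
      ((gM (t • B₁ + (1 - t) • B₂)).trace - t • (gM B₁).trace - (1 - t) • (gM B₂).trace) /
        ((t * (1 - t) : ℝ) : ℂ)

/-! ### Test functions applied to matrices and operators -/

/-- The `m`-th Taylor coefficient of `g` at the origin. -/
def taylorCoeff (g : ℂ → ℂ) (m : ℕ) : ℂ := iteratedDeriv m g 0 / m.factorial

/-- An analytic function applied to a matrix via its power series at `0`. -/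
def matAnalytic {n : ℕ} (g : ℂ → ℂ) (M : Mat n) : Mat n :=
  ∑' m : ℕ, taylorCoeff g m • M ^ m

/-- An analytic function applied to a bounded operator via its power series at `0`. -/
def opAnalytic {d n : ℕ} (g : ℂ → ℂ) (T : CLM d n) : CLM d n :=
  ∑' m : ℕ, taylorCoeff g m • T ^ m

/-- `g^{|1|}(t) = ∑_{m≥2} (m-1)|ω_m| t^{m-1}` for `g(z) = ∑_m ω_m z^m`. -/
def gAbs1 (g : ℂ → ℂ) (t : ℝ) : ℝ :=
  ∑' m : ℕ, (m : ℝ) * ‖taylorCoeff g (m + 1)‖ * t ^ m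

/-- The quantity `t_A = sup_{L ≥ 1} ‖Op_L^l(A)‖ + N^{(d+1,d+2)}(A)`. -/
def tOf {d n : ℕ} (A : E d → E d → Mat n) : ℝ :=
  (⨆ (L : ℝ) (_ : 1 ≤ L), ‖opL L A‖) + normSym A (d + 1) (d + 2)

/-- A smooth compactly supported cutoff equal to `1` on `S`. -/
def IsCutoff {d : ℕ} (S : Set (E d)) (φ : E d → ℝ) : Prop :=
  ContDiff ℝ (⊤ : ℕ∞) φ ∧ HasCompactSupport φ ∧ ∀ x ∈ S, φ x = 1

/-- The radius `t₀ = t_{A₁} + t_{A₂} + t_{B₁} + t_{B₂}` with `B₁ = A₁φψ`, `B₂ = A₂φ`. -/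
def t0Of {d n : ℕ} (A₁ A₂ : E d → E d → Mat n) (φ ψ : E d → ℝ) : ℝ :=
  tOf A₁ + tOf A₂ + tOf (fun x ξ => (φ x * ψ ξ) • A₁ x ξ) + tOf (fun x ξ => φ x • A₂ x ξ)

/-- `sup_x |g^{(k)}(x)|`. -/
def supDeriv (g : ℝ → ℝ) (k : ℕ) : ℝ := ⨆ x : ℝ, |iteratedDeriv k g x|

/-- `max_{0 ≤ k ≤ 2} ‖g^{(k)}‖_∞`. -/
def c2Norm (g : ℝ → ℝ) : ℝ := max (supDeriv g 0) (max (supDeriv g 1) (supDeriv g 2))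

/-! ### Classes of non-smooth test functions -/

/-- Assumption on test functions with a single Hölder singularity at `x₀`
(Assumption 4.2 of the paper). -/
structure AssumptionHS (γ x₀ R : ℝ) (g : ℝ → ℝ) : Prop where
  cont : Continuous g
  supp : tsupport g ⊆ Set.Ioo (x₀ - R) (x₀ + R)
  c2 : ∀ x ∈ Set.Ioo (x₀ - R) (x₀ + R) \ {x₀}, ContDiffAt ℝ 2 g x
  bdd : ∃ C : ℝ, ∀ k ≤ 2, ∀ x ∈ Set.Ioo (x₀ - R) (x₀ + R) \ {x₀},
    |iteratedDeriv k g x| ≤ C * |x - x₀| ^ (γ - (k : ℝ))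

/-- The norm `⦀g⦀_l = max_{0≤k≤l} sup_{x ∈ I \ {x₀}} |g^{(k)}(x)| |x-x₀|^{-γ+k}`. -/
def hsNorm (γ x₀ R : ℝ) (g : ℝ → ℝ) (l : ℕ) : ℝ :=
  ⨆ (k : {k : ℕ // k ≤ l}) (x : {x : ℝ // x ∈ Set.Ioo (x₀ - R) (x₀ + R) \ {x₀}}),
    |iteratedDeriv (k : ℕ) g (x : ℝ)| * |(x : ℝ) - x₀| ^ (((k : ℕ) : ℝ) - γ)

/-- Assumption on test functions with finitely many Hölder singularities
(Assumption 4.1 of the paper). -/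
structure AssumptionH (γ : ℝ) (X : Finset ℝ) (h : ℝ → ℝ) : Prop where
  cont : Continuous h
  c2 : ∀ x ∉ (X : Set ℝ), ContDiffAt ℝ 2 h x
  sing : ∃ (U : ℝ → Set ℝ) (C : ℝ),
    (∀ a ∈ X, U a ∈ 𝓝 a) ∧
    ((X : Set ℝ).Pairwise fun a b => Disjoint (U a) (U b)) ∧
    ∀ a ∈ X, ∀ x ∈ U a \ {a}, ∀ k ≤ 2,
      |iteratedDeriv k (fun y => h y - h a) x| ≤ C * |x - a| ^ (γ - (k : ℝ))



section Statement16Aux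

private lemma complex_normSq (z : ℂ) : z * star z = ((‖z‖ ^ 2 : ℝ) : ℂ) := by
  rw [RCLike.star_def, Complex.mul_conj, Complex.normSq_eq_norm_sq]

private lemma trace_cfc_eq {n : ℕ} {A : Mat n} (hA : A.IsHermitian) (g : ℝ → ℝ) :
    (cfc g A).trace = ((∑ i, g (hA.eigenvalues i) : ℝ) : ℂ) := by
  rw [hA.cfc_eq, Matrix.IsHermitian.cfc, Unitary.conjStarAlgAut_apply, Matrix.trace_mul_cycle,
    Unitary.star_mul_self_of_mem hA.eigenvectorUnitary.2, Matrix.one_mul,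
    Matrix.trace_diagonal]
  push_cast
  rfl

private lemma frob_trace {n : ℕ} (M : Mat n) :
    (Mᴴ * M).trace = ((∑ i, ∑ j, ‖M i j‖ ^ 2 : ℝ) : ℂ) := by
  unfold Matrix.trace
  simp only [Matrix.diag_apply, Matrix.mul_apply, Matrix.conjTranspose_apply,
    Complex.ofReal_sum]
  rw [Finset.sum_comm]
  refine Finset.sum_congr rfl fun i _ => Finset.sum_congr rfl fun j _ => ?_
  rw [mul_comm]
  exact complex_normSq _

set_option maxHeartbeats 1000000 in
private lemma trace_cfc_lipschitz {n : ℕ} {A B : Mat n} (hA : A.IsHermitian) (hB : B.IsHermitian)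
    {g : ℝ → ℝ} {L : ℝ} (hg : ∀ a b : ℝ, |g a - g b| ≤ L * |a - b|) :
    ‖(cfc g A).trace - (cfc g B).trace‖ ≤
      L * Real.sqrt ((n : ℝ) * ∑ i, ∑ j, ‖(A - B) i j‖ ^ 2) := by
  classical
  have hL : 0 ≤ L := by
    have h := hg 0 1
    simp only [zero_sub, abs_neg, abs_one, mul_one] at h
    exact le_trans (abs_nonneg _) h
  set U : Mat n := (hA.eigenvectorUnitary : Mat n) with hUdef
  set V : Mat n := (hB.eigenvectorUnitary : Mat n) with hVdef
  have hUU : star U * U = 1 := Unitary.star_mul_self_of_mem hA.eigenvectorUnitary.2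
  have hUU' : U * star U = 1 := Unitary.mul_star_self_of_mem hA.eigenvectorUnitary.2
  have hVV : star V * V = 1 := Unitary.star_mul_self_of_mem hB.eigenvectorUnitary.2
  have hVV' : V * star V = 1 := Unitary.mul_star_self_of_mem hB.eigenvectorUnitary.2
  set W : Mat n := star U * V with hWdef
  set lam := hA.eigenvalues with hlam
  set mu := hB.eigenvalues with hmu
  have hWW : W * star W = 1 := by
    rw [hWdef, Matrix.star_mul, star_star, Matrix.mul_assoc, ← Matrix.mul_assoc V, hVV',
      Matrix.one_mul, hUU]
  have hWW' : star W * W = 1 := by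
    rw [hWdef, Matrix.star_mul, star_star, Matrix.mul_assoc, ← Matrix.mul_assoc U, hUU',
      Matrix.one_mul, hVV]
  have hrow : ∀ i, ∑ j, ‖W i j‖ ^ 2 = 1 := by
    intro i
    have h1 := congrArg (fun (M : Mat n) => M i i) hWW
    simp only [Matrix.mul_apply, Matrix.one_apply_eq, Matrix.conjTranspose_apply] at h1
    have h2 : ((∑ j, ‖W i j‖ ^ 2 : ℝ) : ℂ) = 1 := by
      rw [Complex.ofReal_sum, ← h1]
      exact Finset.sum_congr rfl fun j _ => (complex_normSq _).symm
    exact_mod_cast h2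
  have hcol : ∀ j, ∑ i, ‖W i j‖ ^ 2 = 1 := by
    intro j
    have h1 := congrArg (fun (M : Mat n) => M j j) hWW'
    simp only [Matrix.mul_apply, Matrix.one_apply_eq, Matrix.conjTranspose_apply] at h1
    have h2 : ((∑ i, ‖W i j‖ ^ 2 : ℝ) : ℂ) = 1 := by
      rw [Complex.ofReal_sum, ← h1]
      exact Finset.sum_congr rfl fun i _ => by rw [mul_comm]; exact (complex_normSq _).symm
    exact_mod_cast h2
  set X : Mat n := star U * (A - B) * V with hXdef
  have hXmat : X = Matrix.diagonal (RCLike.ofReal ∘ lam) * W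
      - W * Matrix.diagonal (RCLike.ofReal ∘ mu) := by
    have hA1 : star U * A = Matrix.diagonal (RCLike.ofReal ∘ lam) * star U := by
      have h : star U * A * U = Matrix.diagonal (RCLike.ofReal ∘ lam) := by
        have := hA.conjStarAlgAut_star_eigenvectorUnitary
        rw [Unitary.conjStarAlgAut_apply, Unitary.coe_star, star_star] at this
        exact this
      calc star U * A = (star U * A * U) * star U := by
            rw [Matrix.mul_assoc, Matrix.mul_assoc, hUU', Matrix.mul_one]
        _ = _ := by rw [h]
    have hB1 : B * V = V * Matrix.diagonal (RCLike.ofReal ∘ mu) := by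
      have h : star V * B * V = Matrix.diagonal (RCLike.ofReal ∘ mu) := by
        have := hB.conjStarAlgAut_star_eigenvectorUnitary
        rw [Unitary.conjStarAlgAut_apply, Unitary.coe_star, star_star] at this
        exact this
      calc B * V = V * (star V * B * V) := by
            rw [← Matrix.mul_assoc, ← Matrix.mul_assoc, hVV', Matrix.one_mul]
        _ = _ := by rw [h]
    have e1 : star U * A * V = Matrix.diagonal (RCLike.ofReal ∘ lam) * W := by
      rw [hA1, Matrix.mul_assoc]
    have e2 : star U * B * V = W * Matrix.diagonal (RCLike.ofReal ∘ mu) := by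
      rw [Matrix.mul_assoc, hB1, ← Matrix.mul_assoc]
    rw [hXdef, Matrix.mul_sub, Matrix.sub_mul, e1, e2]
  have hXentry : ∀ i j, X i j = ((RCLike.ofReal (lam i) : ℂ) - RCLike.ofReal (mu j)) * W i j := by
    intro i j
    rw [hXmat]
    simp only [Matrix.sub_apply, Matrix.diagonal_mul, Matrix.mul_diagonal, Function.comp_apply]
    ring
  have hXnorm : ∀ i j, ‖X i j‖ = |lam i - mu j| * ‖W i j‖ := by
    intro i j
    rw [hXentry, norm_mul, ← RCLike.ofReal_sub, RCLike.norm_ofReal]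
  have hid : (∑ i, g (lam i)) - ∑ j, g (mu j)
      = ∑ i, ∑ j, (g (lam i) - g (mu j)) * ‖W i j‖ ^ 2 := by
    have h1 : ∑ i, ∑ j, g (lam i) * ‖W i j‖ ^ 2 = ∑ i, g (lam i) := by
      refine Finset.sum_congr rfl fun i _ => ?_
      rw [← Finset.mul_sum, hrow, mul_one]
    have h2 : ∑ i, ∑ j, g (mu j) * ‖W i j‖ ^ 2 = ∑ j, g (mu j) := by
      rw [Finset.sum_comm]
      refine Finset.sum_congr rfl fun j _ => ?_
      rw [← Finset.mul_sum, hcol, mul_one]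
    simp only [sub_mul, Finset.sum_sub_distrib, h1, h2]
  have habs : |(∑ i, g (lam i)) - ∑ j, g (mu j)|
      ≤ L * ∑ i, ∑ j, ‖W i j‖ * ‖X i j‖ := by
    rw [hid, Finset.mul_sum]
    refine (Finset.abs_sum_le_sum_abs _ _).trans (Finset.sum_le_sum fun i _ => ?_)
    rw [Finset.mul_sum]
    refine (Finset.abs_sum_le_sum_abs _ _).trans (Finset.sum_le_sum fun j _ => ?_)
    rw [abs_mul, abs_of_nonneg (sq_nonneg (‖W i j‖)), hXnorm]
    calc |g (lam i) - g (mu j)| * ‖W i j‖ ^ 2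
        ≤ (L * |lam i - mu j|) * ‖W i j‖ ^ 2 :=
          mul_le_mul_of_nonneg_right (hg _ _) (sq_nonneg _)
      _ = L * (‖W i j‖ * (|lam i - mu j| * ‖W i j‖)) := by ring
  have hCS : ∑ i, ∑ j, ‖W i j‖ * ‖X i j‖
      ≤ Real.sqrt ((n : ℝ) * ∑ i, ∑ j, ‖X i j‖ ^ 2) := by
    rw [show (∑ i, ∑ j, ‖W i j‖ * ‖X i j‖)
        = ∑ q : Fin n × Fin n, ‖W q.1 q.2‖ * ‖X q.1 q.2‖ from
      (Fintype.sum_prod_type (f := fun q : Fin n × Fin n => ‖W q.1 q.2‖ * ‖X q.1 q.2‖)).symm]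
    have h1 : (∑ q : Fin n × Fin n, ‖W q.1 q.2‖ * ‖X q.1 q.2‖) ^ 2
        ≤ (∑ q : Fin n × Fin n, ‖W q.1 q.2‖ ^ 2) * ∑ q : Fin n × Fin n, ‖X q.1 q.2‖ ^ 2 :=
      Finset.sum_mul_sq_le_sq_mul_sq _ _ _
    have h2 : ∑ q : Fin n × Fin n, ‖W q.1 q.2‖ ^ 2 = (n : ℝ) := by
      rw [Fintype.sum_prod_type, Finset.sum_congr rfl fun i _ => hrow i]
      simp
    rw [show ((n : ℝ) * ∑ i, ∑ j, ‖X i j‖ ^ 2)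
        = (∑ q : Fin n × Fin n, ‖W q.1 q.2‖ ^ 2) * ∑ q : Fin n × Fin n, ‖X q.1 q.2‖ ^ 2 by
      rw [h2, Fintype.sum_prod_type]]
    have h3 : (0:ℝ) ≤ ∑ q : Fin n × Fin n, ‖W q.1 q.2‖ * ‖X q.1 q.2‖ :=
      Finset.sum_nonneg fun q _ => mul_nonneg (norm_nonneg _) (norm_nonneg _)
    calc (∑ q : Fin n × Fin n, ‖W q.1 q.2‖ * ‖X q.1 q.2‖)
        = Real.sqrt ((∑ q : Fin n × Fin n, ‖W q.1 q.2‖ * ‖X q.1 q.2‖) ^ 2) :=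
          (Real.sqrt_sq h3).symm
      _ ≤ _ := Real.sqrt_le_sqrt h1
  have hfrob : ∑ i, ∑ j, ‖X i j‖ ^ 2 = ∑ i, ∑ j, ‖(A - B) i j‖ ^ 2 := by
    have hXct : Xᴴ = star V * (A - B)ᴴ * U := by
      rw [hXdef, ← Matrix.star_eq_conjTranspose, Matrix.star_mul, Matrix.star_mul, star_star,
        Matrix.star_eq_conjTranspose (A - B), ← Matrix.mul_assoc]
    have h1 : Xᴴ * X = star V * ((A - B)ᴴ * (A - B)) * V := by
      rw [hXct, hXdef]
      calc star V * (A - B)ᴴ * U * (star U * (A - B) * V)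
          = star V * (A - B)ᴴ * (U * star U) * ((A - B) * V) := by
            simp only [Matrix.mul_assoc]
        _ = _ := by rw [hUU', Matrix.mul_one]; simp only [Matrix.mul_assoc]
    have h2 : (Xᴴ * X).trace = ((A - B)ᴴ * (A - B)).trace := by
      rw [h1, Matrix.trace_mul_cycle, ← Matrix.mul_assoc, hVV', Matrix.one_mul]
    rw [frob_trace, frob_trace] at h2
    exact_mod_cast h2
  rw [trace_cfc_eq hA g, trace_cfc_eq hB g, ← Complex.ofReal_sub, Complex.norm_real,
    Real.norm_eq_abs]
  calc |(∑ i, g (lam i)) - ∑ j, g (mu j)| ≤ L * ∑ i, ∑ j, ‖W i j‖ * ‖X i j‖ := habs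
    _ ≤ L * Real.sqrt ((n : ℝ) * ∑ i, ∑ j, ‖X i j‖ ^ 2) :=
        mul_le_mul_of_nonneg_left hCS hL
    _ = _ := by rw [hfrob]

private lemma herm_comb {n : ℕ} {B₁ B₂ : Mat n} (h₁ : B₁.IsHermitian) (h₂ : B₂.IsHermitian)
    (t : ℝ) : (t • B₁ + (1 - t) • B₂).IsHermitian := by
  have hs : ∀ (r : ℝ) (M : Mat n), M.IsHermitian → (r • M).IsHermitian := by
    intro r M hM
    unfold Matrix.IsHermitian at *
    ext i j
    simp only [Matrix.conjTranspose_apply, Matrix.smul_apply, star_smul, star_trivial]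
    rw [← Matrix.conjTranspose_apply, hM]
  exact (hs t B₁ h₁).add (hs (1 - t) B₂ h₂)

set_option maxHeartbeats 1000000 in
private lemma frakU_cfc_bound {n : ℕ} {B₁ B₂ : Mat n} (h₁ : B₁.IsHermitian) (h₂ : B₂.IsHermitian)
    {g : ℝ → ℝ} {L : ℝ} (hg : ∀ a b : ℝ, |g a - g b| ≤ L * |a - b|) :
    ‖frakU (fun M => cfc g M) B₁ B₂‖ ≤
      L * (4 * Real.sqrt ((n : ℝ) * ∑ i, ∑ j, ‖(B₁ - B₂) i j‖ ^ 2)) := by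
  have hL : 0 ≤ L := by
    have h := hg 0 1
    simp only [zero_sub, abs_neg, abs_one, mul_one] at h
    exact le_trans (abs_nonneg _) h
  set F : ℝ := Real.sqrt ((n : ℝ) * ∑ i, ∑ j, ‖(B₁ - B₂) i j‖ ^ 2) with hF
  have hF0 : 0 ≤ F := Real.sqrt_nonneg _
  set K : ℝ := L * F with hK
  have hK0 : 0 ≤ K := mul_nonneg hL hF0
  set φ : ℝ → ℂ := fun t => (cfc g (t • B₁ + (1 - t) • B₂)).trace with hφ
  have hLip : ∀ s t : ℝ, ‖φ t - φ s‖ ≤ K * |t - s| := by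
    intro s t
    have hdiff : (t • B₁ + (1 - t) • B₂) - (s • B₁ + (1 - s) • B₂) = (t - s) • (B₁ - B₂) := by
      module
    have hsum : ∑ i, ∑ j, ‖((t • B₁ + (1 - t) • B₂) - (s • B₁ + (1 - s) • B₂)) i j‖ ^ 2
        = (t - s) ^ 2 * ∑ i, ∑ j, ‖(B₁ - B₂) i j‖ ^ 2 := by
      rw [hdiff, Finset.mul_sum]
      refine Finset.sum_congr rfl fun i _ => ?_
      rw [Finset.mul_sum]
      refine Finset.sum_congr rfl fun j _ => ?_
      rw [Matrix.smul_apply, norm_smul, Real.norm_eq_abs, mul_pow, sq_abs]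
    calc ‖φ t - φ s‖
        ≤ L * Real.sqrt ((n : ℝ) * ∑ i, ∑ j,
            ‖((t • B₁ + (1 - t) • B₂) - (s • B₁ + (1 - s) • B₂)) i j‖ ^ 2) :=
          trace_cfc_lipschitz (herm_comb h₁ h₂ t) (herm_comb h₁ h₂ s) hg
      _ = K * |t - s| := by
          rw [hsum, hK, hF, show (n : ℝ) * ((t - s) ^ 2 * ∑ i, ∑ j, ‖(B₁ - B₂) i j‖ ^ 2)
              = (t - s) ^ 2 * ((n : ℝ) * ∑ i, ∑ j, ‖(B₁ - B₂) i j‖ ^ 2) by ring,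
            Real.sqrt_mul (sq_nonneg _), Real.sqrt_sq_eq_abs]
          ring
  have he1 : (cfc g B₁).trace = φ 1 := by
    rw [hφ]; norm_num
  have he0 : (cfc g B₂).trace = φ 0 := by
    rw [hφ]; norm_num
  have hbound : ∀ t ∈ Set.uIoc (0:ℝ) 1,
      ‖(φ t - t • (cfc g B₁).trace - (1 - t) • (cfc g B₂).trace) / ((t * (1 - t) : ℝ) : ℂ)‖
        ≤ 4 * K := by
    intro t ht
    rw [Set.uIoc_of_le zero_le_one] at ht
    obtain ⟨ht0, ht1⟩ := ht
    rw [he1, he0]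
    have hnum1 : ‖φ t - t • φ 1 - (1 - t) • φ 0‖ ≤ 2 * K * t := by
      have : φ t - t • φ 1 - (1 - t) • φ 0 = (φ t - φ 0) - (t : ℂ) * (φ 1 - φ 0) := by
        simp only [Complex.real_smul]
        push_cast
        ring
      rw [this]
      calc ‖(φ t - φ 0) - (t : ℂ) * (φ 1 - φ 0)‖
          ≤ ‖φ t - φ 0‖ + ‖(t : ℂ) * (φ 1 - φ 0)‖ := norm_sub_le _ _
        _ ≤ K * |t - 0| + ‖(t : ℂ)‖ * ‖φ 1 - φ 0‖ := by
            rw [norm_mul]; exact add_le_add_left (hLip 0 t) _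
        _ ≤ K * t + t * (K * 1) := by
            rw [sub_zero, abs_of_pos ht0, Complex.norm_real, Real.norm_eq_abs,
              abs_of_pos ht0]
            have := hLip 0 1
            simp only [sub_zero, abs_one, mul_one] at this ⊢
            exact add_le_add_right (mul_le_mul_of_nonneg_left this ht0.le) _
        _ = 2 * K * t := by ring
    have hnum2 : ‖φ t - t • φ 1 - (1 - t) • φ 0‖ ≤ 2 * K * (1 - t) := by
      have : φ t - t • φ 1 - (1 - t) • φ 0 = (φ t - φ 1) + ((1 - t : ℝ) : ℂ) * (φ 1 - φ 0) := by
        simp only [Complex.real_smul]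
        push_cast
        ring
      rw [this]
      calc ‖(φ t - φ 1) + ((1 - t : ℝ) : ℂ) * (φ 1 - φ 0)‖
          ≤ ‖φ t - φ 1‖ + ‖((1 - t : ℝ) : ℂ)‖ * ‖φ 1 - φ 0‖ := by
            rw [← norm_mul ((1 - t : ℝ) : ℂ)]; exact norm_add_le _ _
        _ ≤ K * |t - 1| + |1 - t| * (K * 1) := by
            refine add_le_add (hLip 1 t) ?_
            rw [Complex.norm_real, Real.norm_eq_abs]
            have := hLip 0 1
            simp only [sub_zero, abs_one, mul_one] at this ⊢
            exact mul_le_mul_of_nonneg_left this (abs_nonneg _)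
        _ = 2 * K * (1 - t) := by
            rw [abs_sub_comm t 1, abs_of_nonneg (by linarith : (0:ℝ) ≤ 1 - t)]
            ring
    rcases eq_or_lt_of_le ht1 with h1 | h1
    · subst h1
      norm_num
      exact hK0
    · have hd0 : (0:ℝ) < t * (1 - t) := mul_pos ht0 (by linarith)
      rw [norm_div, Complex.norm_real, Real.norm_eq_abs, abs_of_pos hd0, div_le_iff₀ hd0]
      rcases le_total t (1/2) with hc | hc
      · calc ‖φ t - t • φ 1 - (1 - t) • φ 0‖ ≤ 2 * K * t := hnum1
          _ ≤ 4 * K * (t * (1 - t)) := by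
              nlinarith [mul_nonneg (mul_nonneg hK0 ht0.le) (by linarith : (0:ℝ) ≤ 1 - 2*t)]
      · calc ‖φ t - t • φ 1 - (1 - t) • φ 0‖ ≤ 2 * K * (1 - t) := hnum2
          _ ≤ 4 * K * (t * (1 - t)) := by
              nlinarith [mul_nonneg (mul_nonneg hK0 (by linarith : (0:ℝ) ≤ 1 - t))
                (by linarith : (0:ℝ) ≤ 2*t - 1)]
  have hint : ‖∫ t in (0:ℝ)..1,
      ((cfc g (t • B₁ + (1 - t) • B₂)).trace - t • (cfc g B₁).trace
        - (1 - t) • (cfc g B₂).trace) / ((t * (1 - t) : ℝ) : ℂ)‖ ≤ 4 * K := by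
    have := intervalIntegral.norm_integral_le_of_norm_le_const hbound
    simpa using this
  rw [frakU, norm_smul, Real.norm_eq_abs]
  have hpi : |((2 * Real.pi) ^ 2)⁻¹| ≤ 1 := by
    have h1 : (1:ℝ) ≤ (2 * Real.pi) ^ 2 := by nlinarith [Real.pi_gt_three]
    rw [abs_of_pos (by positivity)]
    exact inv_le_one_of_one_le₀ h1
  calc |((2 * Real.pi) ^ 2)⁻¹| * ‖_‖ ≤ 1 * (4 * K) := by
        exact mul_le_mul hpi hint (norm_nonneg _) zero_le_one
    _ = L * (4 * F) := by rw [hK]; ring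

set_option maxHeartbeats 1000000 in
private lemma statement16_key {d n : ℕ}
    (A₁ A₂ : E d → E d → Mat n) (hA₁ : IsSymbol A₁) (hA₂ : IsSymbol A₂)
    (hH₁ : ∀ x ξ, (A₁ x ξ).IsHermitian) (hH₂ : ∀ x ξ, (A₂ x ξ).IsHermitian) :
    ∃ c₀ : ℝ, 0 ≤ c₀ ∧ ∀ g : ℝ → ℝ, ContDiff ℝ 1 g →
      BddAbove (Set.range fun x : ℝ => |deriv g x|) →
      ∀ x ξ : E d, ‖frakU (fun M => cfc g M) (A₁ x ξ) (A₂ x ξ)‖ ≤ c₀ * supDeriv g 1 := by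
  classical
  have hbd : ∀ i j : Fin n, ∃ C : ℝ, ∀ x ξ : E d, ‖(A₁ x ξ - A₂ x ξ) i j‖ ≤ C := by
    intro i j
    obtain ⟨C1, hC1⟩ := hA₁.bounded i j 0
    obtain ⟨C2, hC2⟩ := hA₂.bounded i j 0
    refine ⟨C1 + C2, fun x ξ => ?_⟩
    have h1 := hC1 (x, ξ)
    have h2 := hC2 (x, ξ)
    rw [norm_iteratedFDeriv_zero] at h1 h2
    calc ‖(A₁ x ξ - A₂ x ξ) i j‖ = ‖A₁ x ξ i j - A₂ x ξ i j‖ := rfl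
      _ ≤ ‖A₁ x ξ i j‖ + ‖A₂ x ξ i j‖ := norm_sub_le _ _
      _ ≤ C1 + C2 := add_le_add h1 h2
  choose e he using hbd
  set R : ℝ := Real.sqrt ((n : ℝ) * ∑ i, ∑ j, (e i j) ^ 2) with hR
  have hR0 : 0 ≤ R := Real.sqrt_nonneg _
  refine ⟨4 * R, by positivity, ?_⟩
  intro g hg1 hbdd x ξ
  set L := supDeriv g 1 with hLdef
  have hsup : L = ⨆ y : ℝ, |deriv g y| := by
    rw [hLdef]; unfold supDeriv; simp [iteratedDeriv_one]
  have hder : ∀ y : ℝ, |deriv g y| ≤ L := by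
    intro y; rw [hsup]; exact le_ciSup hbdd y
  have hL0 : (0:ℝ) ≤ L := le_trans (abs_nonneg _) (hder 0)
  have hg : ∀ a b : ℝ, |g a - g b| ≤ L * |a - b| := by
    intro a b
    have := Convex.norm_image_sub_le_of_norm_deriv_le
      (fun y (_ : y ∈ (Set.univ : Set ℝ)) => (hg1.differentiable one_ne_zero).differentiableAt)
      (fun y _ => by rw [Real.norm_eq_abs]; exact hder y) convex_univ
      (Set.mem_univ b) (Set.mem_univ a)
    simpa [Real.norm_eq_abs] using this
  calc ‖frakU (fun M => cfc g M) (A₁ x ξ) (A₂ x ξ)‖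
      ≤ L * (4 * Real.sqrt ((n : ℝ) * ∑ i, ∑ j, ‖(A₁ x ξ - A₂ x ξ) i j‖ ^ 2)) :=
        frakU_cfc_bound (hH₁ x ξ) (hH₂ x ξ) hg
    _ ≤ L * (4 * R) := by
        refine mul_le_mul_of_nonneg_left ?_ hL0
        refine mul_le_mul_of_nonneg_left ?_ (by norm_num)
        rw [hR]
        apply Real.sqrt_le_sqrt
        refine mul_le_mul_of_nonneg_left ?_ (Nat.cast_nonneg n)
        refine Finset.sum_le_sum fun i _ => Finset.sum_le_sum fun j _ => ?_
        have h0 : (0:ℝ) ≤ ‖(A₁ x ξ - A₂ x ξ) i j‖ := norm_nonneg _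
        have h1 := he i j x ξ
        nlinarith
    _ = (4 * R) * L := by ring

private lemma supDeriv_nonneg {g : ℝ → ℝ}
    (hbdd : BddAbove (Set.range fun x : ℝ => |deriv g x|)) : 0 ≤ supDeriv g 1 := by
  have hsup : supDeriv g 1 = ⨆ y : ℝ, |deriv g y| := by
    unfold supDeriv; simp [iteratedDeriv_one]
  rw [hsup]
  exact le_trans (abs_nonneg _) (le_ciSup hbdd 0)

private lemma finite_of_surf_lt_top {S : Set (E 1)} (hS : surfMeasure 1 S < ⊤) : S.Finite := by
  have h0 : surfMeasure 1 S = MeasureTheory.Measure.hausdorffMeasure (0:ℝ) S := by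
    unfold surfMeasure; norm_num
  rw [h0] at hS
  by_contra hinf
  replace hinf : S.Infinite := hinf
  set x : ℕ → E 1 := fun k => ((Set.Infinite.natEmbedding S hinf) k : E 1) with hx
  have hxinj : Function.Injective x := fun a b hab =>
    (Set.Infinite.natEmbedding S hinf).injective (Subtype.coe_injective hab)
  have hTsub : (⋃ k : ℕ, {x k}) ⊆ S := by
    simp only [Set.iUnion_subset_iff, Set.singleton_subset_iff]
    exact fun k => ((Set.Infinite.natEmbedding S hinf) k).2
  have htop : MeasureTheory.Measure.hausdorffMeasure (0:ℝ) (⋃ k : ℕ, ({x k} : Set (E 1))) = ⊤ := by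
    rw [MeasureTheory.measure_iUnion ?_ fun k => measurableSet_singleton _]
    · simp only [MeasureTheory.Measure.hausdorffMeasure_zero_singleton]
      exact ENNReal.tsum_const_eq_top_of_ne_zero one_ne_zero
    · intro a b hab
      simp only [Function.onFun, Set.disjoint_singleton]
      exact fun h => hab (hxinj h)
  have := MeasureTheory.measure_mono hTsub (μ := MeasureTheory.Measure.hausdorffMeasure (0:ℝ))
  rw [htop] at this
  exact absurd (lt_of_le_of_lt this hS) (lt_irrefl _)

private lemma normalAt_norm_le_one {d : ℕ} (Ω : Set (E d)) (y : E d) : ‖normalAt Ω y‖ ≤ 1 := by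
  unfold normalAt
  split_ifs with h
  · rw [h.choose_spec.1]
  · simp

end Statement16Aux

/-- Lemma 4.14 of the paper: bound on the boundary coefficient for `C¹`
test functions, `|𝔚₁(𝔘(g;A₁,A₂);∂Λ,∂Γ)| ≤ C ‖g′‖_∞` with `C` independent of `g`. -/
theorem statement16 (d n : ℕ) (hd : 0 < d) (hn : 0 < n)
    (A₁ A₂ : E d → E d → Mat n) (hA₁ : IsSymbol A₁) (hA₂ : IsSymbol A₂)
    (hH₁ : ∀ x ξ, (A₁ x ξ).IsHermitian) (hH₂ : ∀ x ξ, (A₂ x ξ).IsHermitian)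
    (Λ Γ : Set (E d))
    (hΛ : surfMeasure d (frontier Λ) < ⊤) (hΓ : surfMeasure d (frontier Γ) < ⊤) :
    ∃ C : ℝ, 0 < C ∧
      ∀ g : ℝ → ℝ, ContDiff ℝ 1 g → g 0 = 0 →
        BddAbove (Set.range fun x : ℝ => |deriv g x|) →
        ‖W1 (fun x ξ => frakU (fun M => cfc g M) (A₁ x ξ) (A₂ x ξ)) Λ Γ‖ ≤
          C * supDeriv g 1 := by
  classical
  obtain ⟨c₀, hc₀0, key⟩ := statement16_key A₁ A₂ hA₁ hA₂ hH₁ hH₂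
  rcases eq_or_ne d 1 with hd1 | hd1
  · subst hd1
    have hfinP : (frontier Λ ×ˢ frontier Γ).Finite :=
      (finite_of_surf_lt_top hΛ).prod (finite_of_surf_lt_top hΓ)
    haveI := hfinP.fintype
    refine ⟨(Fintype.card ↥(frontier Λ ×ˢ frontier Γ)) * c₀ + 1,
      add_pos_of_nonneg_of_pos (mul_nonneg (Nat.cast_nonneg _) hc₀0) one_pos, ?_⟩
    intro g hg1 hg0 hbdd
    have hL0 := supDeriv_nonneg hbdd
    unfold W1
    rw [if_pos rfl, tsum_fintype]
    calc ‖∑ p : ↥(frontier Λ ×ˢ frontier Γ),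
          frakU (fun M => cfc g M) (A₁ (p : E 1 × E 1).1 (p : E 1 × E 1).2)
            (A₂ (p : E 1 × E 1).1 (p : E 1 × E 1).2)‖
        ≤ ∑ p : ↥(frontier Λ ×ˢ frontier Γ), ‖frakU (fun M => cfc g M)
            (A₁ (p : E 1 × E 1).1 (p : E 1 × E 1).2)
            (A₂ (p : E 1 × E 1).1 (p : E 1 × E 1).2)‖ := norm_sum_le _ _
      _ ≤ ∑ _p : ↥(frontier Λ ×ˢ frontier Γ), c₀ * supDeriv g 1 :=
          Finset.sum_le_sum fun p _ => key g hg1 hbdd _ _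
      _ = (Fintype.card ↥(frontier Λ ×ˢ frontier Γ)) * (c₀ * supDeriv g 1) := by
          rw [Finset.sum_const, Finset.card_univ, nsmul_eq_mul]
      _ ≤ ((Fintype.card ↥(frontier Λ ×ˢ frontier Γ)) * c₀ + 1) * supDeriv g 1 := by
          nlinarith [hL0]
  · set mΛ : ℝ := (surfMeasure d (frontier Λ)).toReal with hmΛ
    set mΓ : ℝ := (surfMeasure d (frontier Γ)).toReal with hmΓ
    have hmΛ0 : 0 ≤ mΛ := ENNReal.toReal_nonneg
    have hmΓ0 : 0 ≤ mΓ := ENNReal.toReal_nonneg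
    refine ⟨c₀ * mΓ * mΛ + 1,
      add_pos_of_nonneg_of_pos (mul_nonneg (mul_nonneg hc₀0 hmΓ0) hmΛ0) one_pos, ?_⟩
    intro g hg1 hg0 hbdd
    set L := supDeriv g 1 with hLdef
    have hL0 : 0 ≤ L := supDeriv_nonneg hbdd
    have hinner : ∀ (x ξ : E d), |⟪normalAt Λ x, normalAt Γ ξ⟫| ≤ 1 := by
      intro x ξ
      refine (abs_real_inner_le_norm _ _).trans ?_
      calc ‖normalAt Λ x‖ * ‖normalAt Γ ξ‖ ≤ 1 * 1 :=
            mul_le_mul (normalAt_norm_le_one _ _) (normalAt_norm_le_one _ _)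
              (norm_nonneg _) zero_le_one
        _ = 1 := one_mul _
    have hbin : ∀ x ∈ frontier Λ,
        ‖∫ ξ in frontier Γ, |⟪normalAt Λ x, normalAt Γ ξ⟫| •
          frakU (fun M => cfc g M) (A₁ x ξ) (A₂ x ξ) ∂(surfMeasure d)‖ ≤ (c₀ * L) * mΓ := by
      intro x _
      refine MeasureTheory.norm_setIntegral_le_of_norm_le_const hΓ
        fun ξ _ => ?_
      rw [norm_smul, Real.norm_eq_abs, abs_abs]
      calc |⟪normalAt Λ x, normalAt Γ ξ⟫| * ‖frakU (fun M => cfc g M) (A₁ x ξ) (A₂ x ξ)‖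
          ≤ 1 * (c₀ * L) := mul_le_mul (hinner x ξ) (key g hg1 hbdd x ξ)
            (norm_nonneg _) zero_le_one
        _ = c₀ * L := one_mul _
    have hout : ‖∫ x in frontier Λ, (∫ ξ in frontier Γ, |⟪normalAt Λ x, normalAt Γ ξ⟫| •
        frakU (fun M => cfc g M) (A₁ x ξ) (A₂ x ξ) ∂(surfMeasure d)) ∂(surfMeasure d)‖
        ≤ ((c₀ * L) * mΓ) * mΛ :=
      MeasureTheory.norm_setIntegral_le_of_norm_le_const hΛ
        hbin
    have hpi : |(((2 * Real.pi) ^ (d - 1) : ℝ))⁻¹| ≤ 1 := by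
      have h2pi : (1:ℝ) ≤ 2 * Real.pi := by nlinarith [Real.pi_gt_three]
      have h1 : (1:ℝ) ≤ (2 * Real.pi) ^ (d - 1) := one_le_pow₀ h2pi
      rw [abs_of_pos (by positivity)]
      exact inv_le_one_of_one_le₀ h1
    unfold W1
    rw [if_neg hd1, norm_smul, Real.norm_eq_abs]
    calc |(((2 * Real.pi) ^ (d - 1) : ℝ))⁻¹| *
          ‖∫ x in frontier Λ, (∫ ξ in frontier Γ, |⟪normalAt Λ x, normalAt Γ ξ⟫| •
            frakU (fun M => cfc g M) (A₁ x ξ) (A₂ x ξ) ∂(surfMeasure d)) ∂(surfMeasure d)‖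
        ≤ 1 * (((c₀ * L) * mΓ) * mΛ) :=
          mul_le_mul hpi hout (norm_nonneg _)
            zero_le_one
      _ = (c₀ * mΓ * mΛ) * L := by ring
      _ ≤ (c₀ * mΓ * mΛ + 1) * L := by nlinarith [hL0]

end Widom
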